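/- arXiv:1103.2392 — 3 statements merged into one kernel-verified Lean document; each statement's English description precedes it below -/
import Mathlib

section
/- Suppose B : I → L(E, H) is differentiable and satisfies (d/dx)(B(x)σ₁(x)) + A B(x) σ₂(x) + B(x) γ(x) = 0, and X : I → L(H) is differentiable with X'(x) = B(x) σ₂(x) B(x)*. If at some point x₀ the Lyapunov equation A X(x₀) + X(x₀) A* + B(x₀) σ₁(x₀) B(x₀)* = 0 holds, then A X(x) + X(x) A* + B(x) σ₁(x) B(x)* = 0 for all x in I. -/
/-!
Let `L = A X + X A* + B σ₁ B*`. It suffices to show `L' = 0` on `I`: then `L` is constant on the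
convex set `I` and vanishes because `L x₀ = 0`. Differentiating `B = P σ₁⁻¹` with `P = B σ₁`, and
using that `σ₁` is self-adjoint, so that `(σ₁⁻¹)* = σ₁⁻¹`, gives
`(B σ₁ B*)' = P' B* + B P'* - B σ₁'* B*`. Substituting `P' = -(A B σ₂ + B γ)`,
`σ₁' = -(γ + γ*)` and `σ₂* = σ₂`, this is exactly `-(A X' + X' A*)`.
-/

open ContinuousLinearMap

theorem Convex.is_const_of_hasDerivWithinAt_zero {G : Type*} [NormedAddCommGroup G]
    [NormedSpace ℝ G] {f : ℝ → G} {s : Set ℝ} {x y : ℝ} (hs : Convex ℝ s)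
    (hf : ∀ z ∈ s, HasDerivWithinAt f 0 s z) (hx : x ∈ s) (hy : y ∈ s) : f x = f y := by
  have h := hs.norm_image_sub_le_of_norm_hasDerivWithin_le hf (fun _ _ => norm_zero.le) hx hy
  rw [zero_mul, norm_le_zero_iff, sub_eq_zero] at h
  exact h.symm

section
variable {𝕜 : Type*} [NontriviallyNormedField 𝕜] {s : Set 𝕜} {x : 𝕜}

theorem HasDerivWithinAt.clm_comp_of_isScalarTower {𝕜' : Type*} [NontriviallyNormedField 𝕜']
    [NormedAlgebra 𝕜 𝕜'] {E F G : Type*} [NormedAddCommGroup E] [NormedSpace 𝕜' E]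
    [NormedAddCommGroup F] [NormedSpace 𝕜' F] [NormedSpace 𝕜 F] [IsScalarTower 𝕜 𝕜' F]
    [NormedAddCommGroup G] [NormedSpace 𝕜' G] [NormedSpace 𝕜 G] [IsScalarTower 𝕜 𝕜' G]
    {c : 𝕜 → F →L[𝕜'] G} {c' : F →L[𝕜'] G} {d : 𝕜 → E →L[𝕜'] F} {d' : E →L[𝕜'] F}
    (hc : HasDerivWithinAt c c' s x) (hd : HasDerivWithinAt d d' s x) :
    HasDerivWithinAt (fun y => (c y).comp (d y)) (c'.comp (d x) + (c x).comp d') s x := by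
  simpa [add_comm] using
    ((compL 𝕜' E F G).bilinearRestrictScalars 𝕜).hasDerivWithinAt_of_bilinear hc hd

theorem ContinuousLinearMap.comp_ringInverse_comp {E F : Type*} [NormedAddCommGroup E]
    [NormedSpace 𝕜 E] [NormedAddCommGroup F] [NormedSpace 𝕜 F] {u : E →L[𝕜] E} (hu : IsUnit u)
    (g : F →L[𝕜] E) : u.comp ((Ring.inverse u).comp g) = g := by
  rw [← comp_assoc, ← mul_def u, Ring.mul_inverse_cancel _ hu, one_def, id_comp]

theorem HasDerivWithinAt.ringInverse {R : Type*} [NormedRing R] [NormedAlgebra 𝕜 R]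
    [CompleteSpace R] {σ : 𝕜 → R} {σ' : R} (hσ : HasDerivWithinAt σ σ' s x)
    (hu : IsUnit (σ x)) :
    HasDerivWithinAt (fun y => Ring.inverse (σ y))
      (-(Ring.inverse (σ x) * σ' * Ring.inverse (σ x))) s x := by
  obtain ⟨u, hu⟩ := hu
  have h := hasFDerivAt_ringInverse (𝕜 := 𝕜) u
  rw [hu] at h
  simpa [← hu, mul_assoc, Function.comp_def] using h.comp_hasDerivWithinAt x hσ

end

theorem HasDerivWithinAt.of_clm_comp_of_isUnit {E G : Type*} [NormedAddCommGroup E]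
    [NormedSpace ℂ E] [CompleteSpace E] [NormedAddCommGroup G] [NormedSpace ℂ G]
    {s : Set ℝ} {x : ℝ} {c : ℝ → E →L[ℂ] G} {u : ℝ → E →L[ℂ] E} {p' : E →L[ℂ] G}
    {u' : E →L[ℂ] E}
    (hp : HasDerivWithinAt (fun y => (c y).comp (u y)) p' s x) (hu : HasDerivWithinAt u u' s x)
    (hunit : ∀ y, IsUnit (u y)) :
    HasDerivWithinAt c ((p' - (c x).comp u').comp (Ring.inverse (u x))) s x := by
  have h := hp.clm_comp_of_isScalarTower (hu.ringInverse (hunit x))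
  have hc : (fun y => ((c y).comp (u y)).comp (Ring.inverse (u y))) = c := funext fun y => by
    rw [comp_assoc, ← mul_def, Ring.mul_inverse_cancel _ (hunit y), one_def, comp_id]
  rw [hc] at h
  convert h using 1
  simp only [sub_eq_add_neg, add_comp, neg_comp, comp_neg, mul_def, comp_assoc,
    comp_ringInverse_comp (hunit x)]

section
variable {E F : Type*} [NormedAddCommGroup E] [InnerProductSpace ℂ E] [CompleteSpace E]
  [NormedAddCommGroup F] [InnerProductSpace ℂ F] [CompleteSpace F] {s : Set ℝ} {x : ℝ}

theorem HasDerivWithinAt.adjoint {B : ℝ → E →L[ℂ] F} {B' : E →L[ℂ] F}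
    (hB : HasDerivWithinAt B B' s x) :
    HasDerivWithinAt (fun y => adjoint (B y)) (adjoint B') s x :=
  -- `adjoint` is conjugate-linear, but continuous and additive, hence `ℝ`-linear.
  let adjointℝ : (E →L[ℂ] F) →L[ℝ] F →L[ℂ] E :=
    (ContinuousLinearMap.adjoint.toLinearEquiv.toAddMonoidHom).toRealLinearMap
      ContinuousLinearMap.adjoint.continuous
  adjointℝ.hasFDerivAt.comp_hasDerivWithinAt x hB

theorem hasDerivWithinAt_comp_comp_adjoint {B : ℝ → E →L[ℂ] F} {σ : ℝ → E →L[ℂ] E}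
    {P' : E →L[ℂ] F} {σ' : E →L[ℂ] E}
    (hP : HasDerivWithinAt (fun y => (B y).comp (σ y)) P' s x) (hσ : HasDerivWithinAt σ σ' s x)
    (hunit : ∀ y, IsUnit (σ y)) (hsa : IsSelfAdjoint (σ x)) :
    HasDerivWithinAt (fun y => ((B y).comp (σ y)).comp (adjoint (B y)))
      (P'.comp (adjoint (B x)) + (B x).comp (adjoint P') -
        ((B x).comp (adjoint σ')).comp (adjoint (B x))) s x := by
  convert hP.clm_comp_of_isScalarTower (hP.of_clm_comp_of_isUnit hσ hunit).adjoint using 1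
  have hinv : adjoint (Ring.inverse (σ x)) = Ring.inverse (σ x) := by
    rw [← star_eq_adjoint, ← Ring.inverse_star, hsa.star_eq]
  simp only [adjoint_comp, hinv, map_sub, comp_sub, comp_assoc, comp_ringInverse_comp (hunit x),
    add_sub_assoc]

end

theorem lyapunov_permanence_general {H E : Type*}
    [NormedAddCommGroup H] [InnerProductSpace ℂ H] [CompleteSpace H]
    [NormedAddCommGroup E] [InnerProductSpace ℂ E] [FiniteDimensional ℂ E]
    (I : Set ℝ) (hI : Convex ℝ I) (x₀ : ℝ) (hx₀ : x₀ ∈ I)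
    (A : H →L[ℂ] H) (B : ℝ → E →L[ℂ] H) (X : ℝ → H →L[ℂ] H)
    (σ₁ σ₂ γ σ₁' : ℝ → E →L[ℂ] E)
    (hσ₁sa : ∀ x, IsSelfAdjoint (σ₁ x)) (hσ₂sa : ∀ x, IsSelfAdjoint (σ₂ x))
    (hσ₁inv : ∀ x, IsUnit (σ₁ x))
    (hσ₁' : ∀ x ∈ I, HasDerivWithinAt σ₁ (σ₁' x) I x)
    (hγ : ∀ x, γ x + adjoint (γ x) = -σ₁' x)
    (hB : ∀ x ∈ I, HasDerivWithinAt (fun y => (B y).comp (σ₁ y))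
      (-((A.comp (B x)).comp (σ₂ x) + (B x).comp (γ x))) I x)
    (hX : ∀ x ∈ I, HasDerivWithinAt X
      (((B x).comp (σ₂ x)).comp (adjoint (B x))) I x)
    (h₀ : A.comp (X x₀) + (X x₀).comp (adjoint A) +
      ((B x₀).comp (σ₁ x₀)).comp (adjoint (B x₀)) = 0) :
    ∀ x ∈ I, A.comp (X x) + (X x).comp (adjoint A) +
      ((B x).comp (σ₁ x)).comp (adjoint (B x)) = 0 := by
  have hL : ∀ x ∈ I, HasDerivWithinAt (fun y => A.comp (X y) + (X y).comp (adjoint A) +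
      ((B y).comp (σ₁ y)).comp (adjoint (B y))) 0 I x := by
    intro x hx
    have hAX := (hasDerivWithinAt_const x I A).clm_comp_of_isScalarTower (hX x hx)
    have hXA := (hX x hx).clm_comp_of_isScalarTower (hasDerivWithinAt_const x I (adjoint A))
    have hBσB := hasDerivWithinAt_comp_comp_adjoint (hB x hx) (hσ₁' x hx) hσ₁inv (hσ₁sa x)
    refine ((hAX.add hXA).add hBσB).congr_deriv ?_
    rw [neg_eq_iff_eq_neg.mp (hγ x).symm]
    simp only [zero_comp, comp_zero, zero_add, add_zero, map_add, map_neg, adjoint_comp,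
      adjoint_adjoint, (hσ₂sa x).adjoint_eq, add_comp, comp_add, neg_comp, comp_neg, comp_assoc]
    abel
  exact fun x hx => (hI.is_const_of_hasDerivWithinAt_zero hL hx hx₀).trans h₀

/-- Lyapunov condition permanence: if `(Bσ₁)' + ABσ₂ + Bγ = 0` and `X' = Bσ₂B*`,
and the Lyapunov equation `AX + XA* + Bσ₁B* = 0` holds at `x₀`, then it holds on
all of the interval `I`. -/
theorem lyapunov_permanence {H E : Type*}
    [NormedAddCommGroup H] [InnerProductSpace ℂ H] [CompleteSpace H]
    [NormedAddCommGroup E] [InnerProductSpace ℂ E] [FiniteDimensional ℂ E]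
    (I : Set ℝ) (hI : Convex ℝ I) (x₀ : ℝ) (hx₀ : x₀ ∈ I)
    (A : H →L[ℂ] H) (B : ℝ → E →L[ℂ] H) (X : ℝ → H →L[ℂ] H)
    (σ₁ σ₂ γ σ₁' : ℝ → E →L[ℂ] E)
    (hσ₁sa : ∀ x, IsSelfAdjoint (σ₁ x)) (hσ₂sa : ∀ x, IsSelfAdjoint (σ₂ x))
    (hσ₁inv : ∀ x, IsUnit (σ₁ x))
    (hσ₁' : ∀ x ∈ I, HasDerivWithinAt σ₁ (σ₁' x) I x)
    (hγ : ∀ x, γ x + adjoint (γ x) = -σ₁' x)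
    (hBdiff : ∀ x ∈ I, DifferentiableWithinAt ℝ B I x)
    (hB : ∀ x ∈ I, HasDerivWithinAt (fun y => (B y).comp (σ₁ y))
      (-((A.comp (B x)).comp (σ₂ x) + (B x).comp (γ x))) I x)
    (hX : ∀ x ∈ I, HasDerivWithinAt X
      (((B x).comp (σ₂ x)).comp (adjoint (B x))) I x)
    (h₀ : A.comp (X x₀) + (X x₀).comp (adjoint A) +
      ((B x₀).comp (σ₁ x₀)).comp (adjoint (B x₀)) = 0) :
    ∀ x ∈ I, A.comp (X x) + (X x).comp (adjoint A) +
      ((B x).comp (σ₁ x)).comp (adjoint (B x)) = 0 :=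
  lyapunov_permanence_general I hI x₀ hx₀ A B X σ₁ σ₂ γ σ₁' hσ₁sa hσ₂sa hσ₁inv hσ₁' hγ hB hX h₀
end

section
/- Let A be a bounded operator on a Hilbert space H, B : E → H bounded with E finite-dimensional, X an invertible self-adjoint bounded operator on H, and σ₁ an invertible self-adjoint operator on E, satisfying the Lyapunov equation A X + X A* + B σ₁ B* = 0. Define S(λ) = I − B* X⁻¹ (λI − A)⁻¹ B σ₁ for λ outside the spectrum of A. Then for all λ, μ outside the spectrum of A, S(μ)* σ₁ S(λ) − σ₁ = −(μ̄ + λ) σ₁ B* (μ̄ I − A*)⁻¹ X⁻¹ (λ I − A)⁻¹ B σ₁. In particular S(−λ̄)* σ₁ S(λ) = σ₁. -/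
/-!
Write `L = λ − A` and `M = μ̄ − A*`. The Lyapunov equation says exactly that
`L X + X M = (μ̄ + λ) X + B σ₁ B*`, and sandwiching `L X + X M` between `M⁻¹ X⁻¹` and
`X⁻¹ L⁻¹` gives `M⁻¹ X⁻¹ + X⁻¹ L⁻¹`. Expanding `S(μ)* σ₁ S(λ) − σ₁` produces precisely the
terms `M⁻¹ X⁻¹ + X⁻¹ L⁻¹ − M⁻¹ X⁻¹ (B σ₁ B*) X⁻¹ L⁻¹` between `σ₁ B*` and `B σ₁`, which
therefore collapse to `(μ̄ + λ) M⁻¹ X⁻¹ L⁻¹`. At `μ = −λ̄` the factor `μ̄ + λ` vanishes.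
-/

open ContinuousLinearMap

/-- The transfer function `S(λ) = I − B* X⁻¹ (λI − A)⁻¹ B σ₁`. -/
noncomputable def transferFn {H E : Type*}
    [NormedAddCommGroup H] [InnerProductSpace ℂ H] [CompleteSpace H]
    [NormedAddCommGroup E] [InnerProductSpace ℂ E] [FiniteDimensional ℂ E]
    (A Xinv : H →L[ℂ] H) (B : E →L[ℂ] H) (σ₁ : E →L[ℂ] E) (lam : ℂ) :
    E →L[ℂ] E :=
  1 - ((((adjoint B).comp Xinv).comp
    (Ring.inverse (lam • (1 : H →L[ℂ] H) - A))).comp B).comp σ₁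

theorem IsSelfAdjoint.of_mul_eq_one {R : Type*} [Monoid R] [StarMul R] {x y : R}
    (hx : IsSelfAdjoint x) (hxy : x * y = 1) : IsSelfAdjoint y :=
  left_inv_eq_right_inv (by rw [← hx.star_eq, ← star_mul, hxy, star_one]) hxy

theorem mul_mul_add_mul_mul_eq {R : Type*} [Ring R] {L M X Xinv Rl Rm : R}
    (hX1 : X * Xinv = 1) (hX2 : Xinv * X = 1) (hL : L * Rl = 1) (hM : Rm * M = 1) :
    Rm * Xinv * (L * X + X * M) * Xinv * Rl = Rm * Xinv + Xinv * Rl := by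
  have hL' : L * X * Xinv * Rl = 1 := by rw [mul_assoc L, hX1, mul_one, hL]
  have hM' : Rm * Xinv * X * M = 1 := by rw [mul_assoc Rm, hX2, mul_one, hM]
  calc Rm * Xinv * (L * X + X * M) * Xinv * Rl
      = Rm * Xinv * (L * X * Xinv * Rl) + Rm * Xinv * X * M * (Xinv * Rl) := by noncomm_ring
    _ = Rm * Xinv + Xinv * Rl := by rw [hL', hM', mul_one, one_mul]

theorem sub_mul_mul_eq_smul_of_mul_add_mul_eq {𝕜 R : Type*} [CommRing 𝕜] [Ring R]
    [Algebra 𝕜 R] {L M X Xinv Rl Rm Q : R} {c : 𝕜}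
    (hX1 : X * Xinv = 1) (hX2 : Xinv * X = 1) (hL : L * Rl = 1) (hM : Rm * M = 1)
    (hLM : L * X + X * M = c • X + Q) :
    Rm * Xinv + Xinv * Rl - Rm * Xinv * Q * Xinv * Rl = c • (Rm * Xinv * Rl) := by
  rw [← mul_mul_add_mul_mul_eq hX1 hX2 hL hM, hLM]
  simp only [mul_add, add_mul, smul_mul_assoc, mul_smul_comm, mul_assoc]
  rw [← mul_assoc X, hX1, one_mul, add_sub_cancel_right]

theorem ContinuousLinearMap.adjoint_smul_one_sub {H : Type*}
    [NormedAddCommGroup H] [InnerProductSpace ℂ H] [CompleteSpace H] (A : H →L[ℂ] H) (μ : ℂ) :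
    adjoint (μ • 1 - A) = starRingEnd ℂ μ • 1 - adjoint A := by
  rw [map_sub, map_smulₛₗ, adjoint_one]

theorem ContinuousLinearMap.adjoint_ringInverse_smul_one_sub {H : Type*}
    [NormedAddCommGroup H] [InnerProductSpace ℂ H] [CompleteSpace H] (A : H →L[ℂ] H) (μ : ℂ) :
    adjoint (Ring.inverse (μ • 1 - A)) = Ring.inverse (starRingEnd ℂ μ • 1 - adjoint A) := by
  rw [← star_eq_adjoint, ← Ring.inverse_star, star_eq_adjoint, adjoint_smul_one_sub]

theorem adjoint_transferFn {H E : Type*}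
    [NormedAddCommGroup H] [InnerProductSpace ℂ H] [CompleteSpace H]
    [NormedAddCommGroup E] [InnerProductSpace ℂ E] [FiniteDimensional ℂ E]
    (A Xinv : H →L[ℂ] H) (B : E →L[ℂ] H) (σ₁ : E →L[ℂ] E) (μ : ℂ)
    (hXinv : IsSelfAdjoint Xinv) (hσ₁ : IsSelfAdjoint σ₁) :
    adjoint (transferFn A Xinv B σ₁ μ) =
      1 - σ₁ ∘L adjoint B ∘L Ring.inverse (starRingEnd ℂ μ • 1 - adjoint A) ∘L Xinv ∘L B := by
  simp only [transferFn, map_sub, adjoint_comp, adjoint_adjoint, hXinv.adjoint_eq,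
    hσ₁.adjoint_eq, adjoint_ringInverse_smul_one_sub, adjoint_one, comp_assoc]

theorem one_sub_comp_comp_one_sub_sub {𝕜 E H : Type*} [NontriviallyNormedField 𝕜]
    [NormedAddCommGroup E] [NormedSpace 𝕜 E] [NormedAddCommGroup H] [NormedSpace 𝕜 H]
    (σ : E →L[𝕜] E) (F : H →L[𝕜] E) (G : E →L[𝕜] H) (P Q : H →L[𝕜] H) :
    (1 - σ ∘L F ∘L P ∘L G) ∘L σ ∘L (1 - F ∘L Q ∘L G ∘L σ) - σ =
      -(σ ∘L F ∘L (P + Q - P ∘L G ∘L σ ∘L F ∘L Q) ∘L G ∘L σ) := by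
  simp only [comp_sub, sub_comp, comp_add, add_comp, one_def, id_comp, comp_id, comp_assoc]
  abel

theorem adjoint_transferFn_comp_comp_transferFn_sub {H E : Type*}
    [NormedAddCommGroup H] [InnerProductSpace ℂ H] [CompleteSpace H]
    [NormedAddCommGroup E] [InnerProductSpace ℂ E] [FiniteDimensional ℂ E]
    (A X Xinv : H →L[ℂ] H) (B : E →L[ℂ] H) (σ₁ : E →L[ℂ] E)
    (hXsa : IsSelfAdjoint X) (hX1 : X.comp Xinv = 1) (hX2 : Xinv.comp X = 1)
    (hσ₁sa : IsSelfAdjoint σ₁)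
    (hLyap : A.comp X + X.comp (adjoint A) + (B.comp σ₁).comp (adjoint B) = 0)
    {lam mu : ℂ} (hl : IsUnit (lam • (1 : H →L[ℂ] H) - A))
    (hm : IsUnit (mu • (1 : H →L[ℂ] H) - A)) :
    (adjoint (transferFn A Xinv B σ₁ mu)).comp (σ₁.comp (transferFn A Xinv B σ₁ lam)) - σ₁ =
      (-((starRingEnd ℂ) mu + lam)) •
        (σ₁.comp ((((adjoint B).comp
          (Ring.inverse ((starRingEnd ℂ mu) • (1 : H →L[ℂ] H) - adjoint A))).comp
          (Xinv.comp (Ring.inverse (lam • (1 : H →L[ℂ] H) - A)))).comp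
          (B.comp σ₁))) := by
  set Rl := Ring.inverse (lam • (1 : H →L[ℂ] H) - A)
  set Rm := Ring.inverse ((starRingEnd ℂ mu) • (1 : H →L[ℂ] H) - adjoint A)
  have hRl : (lam • 1 - A) * Rl = 1 := Ring.mul_inverse_cancel _ hl
  have hRm : Rm * ((starRingEnd ℂ mu) • 1 - adjoint A) = 1 :=
    Ring.inverse_mul_cancel _ (adjoint_smul_one_sub A mu ▸ hm.star)
  have hLM : (lam • 1 - A) * X + X * ((starRingEnd ℂ mu) • 1 - adjoint A) =
      ((starRingEnd ℂ) mu + lam) • X + B ∘L σ₁ ∘L adjoint B := by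
    rw [← sub_eq_zero, ← neg_eq_zero, ← hLyap]
    simp only [mul_def, sub_comp, comp_sub, smul_comp, comp_smul, one_def, id_comp, comp_id,
      add_smul, comp_assoc]
    abel
  have hcollapse := sub_mul_mul_eq_smul_of_mul_add_mul_eq hX1 hX2 hRl hRm hLM
  simp only [mul_def, comp_assoc] at hcollapse
  rw [adjoint_transferFn _ _ _ _ _ (hXsa.of_mul_eq_one hX1) hσ₁sa, transferFn]
  have hexpand := one_sub_comp_comp_one_sub_sub σ₁ (adjoint B) B (Rm ∘L Xinv) (Xinv ∘L Rl)
  simp only [comp_assoc] at hexpand ⊢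
  rw [hexpand, hcollapse]
  simp only [smul_comp, comp_smul, neg_smul, comp_assoc]

theorem transferFn_symmetry_general {H E : Type*}
    [NormedAddCommGroup H] [InnerProductSpace ℂ H] [CompleteSpace H]
    [NormedAddCommGroup E] [InnerProductSpace ℂ E] [FiniteDimensional ℂ E]
    (A X Xinv : H →L[ℂ] H) (B : E →L[ℂ] H) (σ₁ : E →L[ℂ] E)
    (hXsa : IsSelfAdjoint X) (hX1 : X.comp Xinv = 1) (hX2 : Xinv.comp X = 1)
    (hσ₁sa : IsSelfAdjoint σ₁)
    (hLyap : A.comp X + X.comp (adjoint A) + (B.comp σ₁).comp (adjoint B) = 0) :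
    (∀ lam mu : ℂ, IsUnit (lam • (1 : H →L[ℂ] H) - A) →
      IsUnit (mu • (1 : H →L[ℂ] H) - A) →
      (adjoint (transferFn A Xinv B σ₁ mu)).comp
          (σ₁.comp (transferFn A Xinv B σ₁ lam)) - σ₁ =
        (-((starRingEnd ℂ) mu + lam)) •
          (σ₁.comp ((((adjoint B).comp
            (Ring.inverse ((starRingEnd ℂ mu) • (1 : H →L[ℂ] H) - adjoint A))).comp
            (Xinv.comp (Ring.inverse (lam • (1 : H →L[ℂ] H) - A)))).comp
            (B.comp σ₁)))) ∧
    (∀ lam : ℂ, IsUnit (lam • (1 : H →L[ℂ] H) - A) →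
      IsUnit ((-(starRingEnd ℂ lam)) • (1 : H →L[ℂ] H) - A) →
      (adjoint (transferFn A Xinv B σ₁ (-(starRingEnd ℂ lam)))).comp
        (σ₁.comp (transferFn A Xinv B σ₁ lam)) = σ₁) := by
  refine ⟨fun lam mu hl hm => adjoint_transferFn_comp_comp_transferFn_sub A X Xinv B σ₁
    hXsa hX1 hX2 hσ₁sa hLyap hl hm, fun lam hl hm => ?_⟩
  have h := adjoint_transferFn_comp_comp_transferFn_sub A X Xinv B σ₁
    hXsa hX1 hX2 hσ₁sa hLyap hl hm
  rwa [map_neg, Complex.conj_conj, neg_add_cancel, neg_zero, zero_smul, sub_eq_zero] at h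

/-- Under the Lyapunov equation `AX + XA* + Bσ₁B* = 0`, the transfer function
satisfies `S(μ)*σ₁S(λ) − σ₁ = −(μ̄+λ) σ₁B*(μ̄−A*)⁻¹X⁻¹(λ−A)⁻¹Bσ₁`; in
particular `S(−λ̄)* σ₁ S(λ) = σ₁`. -/
theorem transferFn_symmetry {H E : Type*}
    [NormedAddCommGroup H] [InnerProductSpace ℂ H] [CompleteSpace H]
    [NormedAddCommGroup E] [InnerProductSpace ℂ E] [FiniteDimensional ℂ E]
    (A X Xinv : H →L[ℂ] H) (B : E →L[ℂ] H) (σ₁ : E →L[ℂ] E)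
    (hXsa : IsSelfAdjoint X) (hX1 : X.comp Xinv = 1) (hX2 : Xinv.comp X = 1)
    (hσ₁sa : IsSelfAdjoint σ₁) (hσ₁ : IsUnit σ₁)
    (hLyap : A.comp X + X.comp (adjoint A) + (B.comp σ₁).comp (adjoint B) = 0) :
    (∀ lam mu : ℂ, IsUnit (lam • (1 : H →L[ℂ] H) - A) →
      IsUnit (mu • (1 : H →L[ℂ] H) - A) →
      (adjoint (transferFn A Xinv B σ₁ mu)).comp
          (σ₁.comp (transferFn A Xinv B σ₁ lam)) - σ₁ =
        (-((starRingEnd ℂ) mu + lam)) •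
          (σ₁.comp ((((adjoint B).comp
            (Ring.inverse ((starRingEnd ℂ mu) • (1 : H →L[ℂ] H) - adjoint A))).comp
            (Xinv.comp (Ring.inverse (lam • (1 : H →L[ℂ] H) - A)))).comp
            (B.comp σ₁)))) ∧
    (∀ lam : ℂ, IsUnit (lam • (1 : H →L[ℂ] H) - A) →
      IsUnit ((-(starRingEnd ℂ lam)) • (1 : H →L[ℂ] H) - A) →
      (adjoint (transferFn A Xinv B σ₁ (-(starRingEnd ℂ lam)))).comp
        (σ₁.comp (transferFn A Xinv B σ₁ lam)) = σ₁) :=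
  transferFn_symmetry_general A X Xinv B σ₁ hXsa hX1 hX2 hσ₁sa hLyap
end

section
/- Given a vessel with operators A, B(x), X(x) satisfying X'(x) = B(x) σ₂ B(x)* with σ₂ = [[1,0],[0,0]], and defining Ω(x,y) = ⟨X(x₀)⁻¹ B(y) e₁, B(x) e₁⟩ and K(x,y) = −⟨X(x)⁻¹ B(y) e₁, B(x) e₁⟩ where e₁ = (1,0)ᵀ, the Gelfand–Levitan equation holds: K(x,y) + Ω(x,y) + ∫_{x₀}^x K(x,t) Ω(t,y) dt = 0. -/
/-! Since `X' = (B e₁)(B e₁)*`, the integral `∫ K(x,t) Ω(t,y) dt` equals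
`-⟨B(x)e₁, X(x)⁻¹ (X(x) - X(x₀)) X(x₀)⁻¹ B(y)e₁⟩`, and expanding
`X(x)⁻¹ (X(x) - X(x₀)) X(x₀)⁻¹ = X(x₀)⁻¹ - X(x)⁻¹` gives exactly `-Ω(x,y) - K(x,y)`. -/

open ContinuousLinearMap

noncomputable def e₁ : EuclideanSpace ℂ (Fin 2) := EuclideanSpace.single 0 1

open InnerProductSpace

section RankOneIntegral

variable {𝕜 E : Type*} [RCLike 𝕜] [NormedAddCommGroup E] [InnerProductSpace 𝕜 E]

theorem Continuous.rankOne_self {α : Type*} [TopologicalSpace α] {v : α → E}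
    (hv : Continuous v) : Continuous fun t => rankOne 𝕜 (v t) (v t) := by
  simp_rw [rankOne_def]
  fun_prop

theorem intervalIntegral_inner_mul_inner_eq_inner_integral_rankOne
    [NormedSpace ℝ E] [IsScalarTower ℝ 𝕜 E] [CompleteSpace E]
    {v : ℝ → E} (hv : Continuous v) (T : E →L[𝕜] E) (w u : E) (a b : ℝ) :
    ∫ t in a..b, inner 𝕜 w (T (v t)) * inner 𝕜 (v t) u =
      inner 𝕜 w (T ((∫ t in a..b, rankOne 𝕜 (v t) (v t)) u)) := by
  let L : (E →L[𝕜] E) →L[𝕜] 𝕜 := ((innerSL 𝕜 w).comp T).comp (apply 𝕜 E u)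
  have hL : ∀ S : E →L[𝕜] E, L S = inner 𝕜 w (T (S u)) := fun _ => rfl
  rw [← hL, ← L.intervalIntegral_comp_comm (hv.rankOne_self.intervalIntegrable a b)]
  simp only [hL, rankOne_apply, map_smul, inner_smul_right, mul_comm]

end RankOneIntegral

theorem gelfand_levitan_general {H : Type*}
    [NormedAddCommGroup H] [InnerProductSpace ℂ H] [CompleteSpace H]
    (x₀ : ℝ) (B : ℝ → EuclideanSpace ℂ (Fin 2) →L[ℂ] H) (hB : Continuous B)
    (X Xinv : ℝ → H →L[ℂ] H)
    (hX1 : ∀ x, (X x).comp (Xinv x) = 1) (hX2 : ∀ x, (Xinv x).comp (X x) = 1)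
    (hXder : ∀ x, X x = X x₀ +
      ∫ t in x₀..x, (innerSL ℂ (B t e₁)).smulRight (B t e₁))
    (Ω K : ℝ → ℝ → ℂ)
    (hΩ : ∀ x y, Ω x y = inner ℂ (B x e₁) (Xinv x₀ (B y e₁)))
    (hK : ∀ x y, K x y = -(inner ℂ (B x e₁) (Xinv x (B y e₁)) : ℂ)) :
    ∀ x y, K x y + Ω x y + ∫ t in x₀..x, K x t * Ω t y = 0 := by
  intro x y
  set u := Xinv x₀ (B y e₁)
  have hXu : Xinv x (X x u) = u := congr($(hX2 x) u)
  have hX₀u : X x₀ u = B y e₁ := congr($(hX1 x₀) (B y e₁))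
  have hXdiff : ∫ t in x₀..x, rankOne ℂ (B t e₁) (B t e₁) = X x - X x₀ := by
    rw [hXder x]
    exact (add_sub_cancel_left _ _).symm
  have hkernel : ∫ t in x₀..x, K x t * Ω t y = -inner ℂ (B x e₁) (Xinv x ((X x - X x₀) u)) := by
    simp only [hK, hΩ, neg_mul, intervalIntegral.integral_neg]
    rw [intervalIntegral_inner_mul_inner_eq_inner_integral_rankOne
      (hB.clm_apply continuous_const), hXdiff]
  rw [hkernel, hK, hΩ, sub_apply, map_sub, hXu, hX₀u, inner_sub_right]
  ring

/-- The Gelfand–Levitan equation: with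
`Ω(x,y) = ⟨X(x₀)⁻¹ B(y)e₁, B(x)e₁⟩` and `K(x,y) = −⟨X(x)⁻¹ B(y)e₁, B(x)e₁⟩`,
one has `K(x,y) + Ω(x,y) + ∫_{x₀}^x K(x,t) Ω(t,y) dt = 0`. -/
theorem gelfand_levitan {H : Type*}
    [NormedAddCommGroup H] [InnerProductSpace ℂ H] [CompleteSpace H]
    (x₀ : ℝ) (B : ℝ → EuclideanSpace ℂ (Fin 2) →L[ℂ] H) (hB : Continuous B)
    (X Xinv : ℝ → H →L[ℂ] H)
    (hX1 : ∀ x, (X x).comp (Xinv x) = 1) (hX2 : ∀ x, (Xinv x).comp (X x) = 1)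
    (hXder : ∀ x, X x = X x₀ +
      ∫ t in x₀..x, (innerSL ℂ (B t e₁)).smulRight (B t e₁))
    (hXinvcont : Continuous Xinv)
    (Ω K : ℝ → ℝ → ℂ)
    (hΩ : ∀ x y, Ω x y = inner ℂ (B x e₁) (Xinv x₀ (B y e₁)))
    (hK : ∀ x y, K x y = -(inner ℂ (B x e₁) (Xinv x (B y e₁)) : ℂ)) :
    ∀ x y, K x y + Ω x y + ∫ t in x₀..x, K x t * Ω t y = 0 :=
  gelfand_levitan_general x₀ B hB X Xinv hX1 hX2 hXder Ω K hΩ hK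
end
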